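/- Let f: R → S be a ring homomorphism and let C be a definable subcategory of Mod-S. If N is an elementary cogenerator for C, then the restriction N_R of N along f is an elementary cogenerator for the restricted definable subcategory C|_R of Mod-R. -/

import Mathlib

/-!
Core framework for formalizing statements from
"Tensor and direct extension of definable subcategories" (M. Prest).

Conventions:
* A *right* `R`-module is a type with `[AddCommGroup M] [Module Rᵐᵒᵖ M]`;
  the right action of `r : R` on `a : M` is `MulOpposite.op r • a`.
* A *left* `R`-module is a type with `[AddCommGroup L] [Module R L]`.
* An `(R,S)`-bimodule is a type with a left `R`-action and a right `S`-action
  which commute: `[Module R B] [Module Sᵐᵒᵖ B] [SMulCommClass R Sᵐᵒᵖ B]`.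
-/

open MulOpposite

universe u v

namespace MTM

/-- A pp formula for (right) `R`-modules, with free variables indexed by `ι`,
bound variables indexed by `κ` and equations indexed by `ε`:
`∃ ȳ (x̄ A + ȳ B = 0)`. -/
structure PP (R : Type u) [Ring R] (ι : Type) : Type (max u 1) where
  κ : Type
  ε : Type
  [fintκ : Fintype κ]
  [fintε : Fintype ε]
  A : Matrix ι ε R
  B : Matrix κ ε R

attribute [instance] PP.fintκ PP.fintε

namespace PP

variable {R : Type u} [Ring R] {S : Type u} [Ring S] {ι : Type} [Fintype ι]

/-- The solution set of a pp formula in a right `R`-module. -/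
def sol (φ : PP R ι) (M : Type v) [AddCommGroup M] [Module Rᵐᵒᵖ M] : Set (ι → M) :=
  { a | ∃ b : φ.κ → M, ∀ j : φ.ε,
      (∑ i, op (φ.A i j) • a i) + (∑ k, op (φ.B k j) • b k) = 0 }

/-- The solution set of a pp formula in a left `R`-module (the formula is then read
with coefficients acting on the left). -/
def solL (φ : PP R ι) (L : Type v) [AddCommGroup L] [Module R L] : Set (ι → L) :=
  { a | ∃ b : φ.κ → L, ∀ j : φ.ε,
      (∑ i, φ.A i j • a i) + (∑ k, φ.B k j • b k) = 0 }

/-- `φ ≤ ψ` : every solution of `φ` is a solution of `ψ`, in every right `R`-module. -/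
def Le (φ ψ : PP R ι) : Prop :=
  ∀ (M : Type u) [AddCommGroup M] [Module Rᵐᵒᵖ M], φ.sol M ⊆ ψ.sol M

/-- The elementary dual `Dφ = ∃ z̄ (x̄ = A z̄ ∧ B z̄ = 0)` of a pp formula for right modules;
it is a pp formula for left `R`-modules (to be interpreted via `solL`). -/
noncomputable def dual (φ : PP R ι) : PP R ι where
  κ := φ.ε
  ε := ι ⊕ φ.κ
  A := fun i e =>
    letI := Classical.decEq ι
    Sum.elim (fun i' => if i = i' then (1 : R) else 0) (fun _ => (0 : R)) e
  B := fun z e => Sum.elim (fun i' => -(φ.A i' z)) (fun k => φ.B k z) e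

/-- Transport of a pp formula along a ring homomorphism (`f⁎φ`). -/
def map (f : R →+* S) (φ : PP R ι) : PP S ι :=
  { κ := φ.κ, ε := φ.ε, A := fun i j => f (φ.A i j), B := fun k j => f (φ.B k j) }

end PP

variable (R : Type u) [Ring R] (S : Type u) [Ring S]

/-- A pp-pair `φ/ψ` for right `R`-modules: pp formulas (in `n` free variables)
with `ψ(M) ≤ φ(M)` for every right `R`-module `M`. -/
structure PPPair : Type (u + 1) where
  n : ℕ
  num : PP R (Fin n)
  den : PP R (Fin n)
  le : ∀ (M : Type u) [AddCommGroup M] [Module Rᵐᵒᵖ M], den.sol M ⊆ num.sol M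

/-- A pp-pair for left `R`-modules. -/
structure PPPairL : Type (u + 1) where
  n : ℕ
  num : PP R (Fin n)
  den : PP R (Fin n)
  le : ∀ (L : Type u) [AddCommGroup L] [Module R L], den.solL L ⊆ num.solL L

variable {R}

/-- A pp-pair is closed on a right module `M` if the two solution sets agree. -/
def PPPair.ClosedOn (p : PPPair R) (M : Type v) [AddCommGroup M] [Module Rᵐᵒᵖ M] : Prop :=
  p.num.sol M = p.den.sol M

/-- A pp-pair is closed on a left module `L` if the two solution sets agree. -/
def PPPairL.ClosedOn (p : PPPairL R) (L : Type v) [AddCommGroup L] [Module R L] : Prop :=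
  p.num.solL L = p.den.solL L

variable (R)

/-- The subcategory (class of modules, as a set of objects of `Mod-R`) defined by
closure of a set of pp-pairs. -/
def definedBy (Φ : Set (PPPair R)) : Set (ModuleCat.{u} Rᵐᵒᵖ) :=
  { M | ∀ p ∈ Φ, p.ClosedOn M }

/-- The subcategory of left modules defined by closure of a set of pp-pairs. -/
def definedByL (Φ : Set (PPPairL R)) : Set (ModuleCat.{u} R) :=
  { L | ∀ p ∈ Φ, p.ClosedOn L }

/-- A class of right `R`-modules is a definable subcategory if it is the class of
modules on which each pp-pair in some set of pp-pairs is closed. -/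
def IsDefinable (D : Set (ModuleCat.{u} Rᵐᵒᵖ)) : Prop :=
  ∃ Φ : Set (PPPair R), D = definedBy R Φ

/-- Definability for classes of left `R`-modules. -/
def IsDefinableL (D : Set (ModuleCat.{u} R)) : Prop :=
  ∃ Φ : Set (PPPairL R), D = definedByL R Φ

/-- `⟨X⟩`: the smallest definable subcategory of `Mod-R` containing `X`. -/
def gen (X : Set (ModuleCat.{u} Rᵐᵒᵖ)) : Set (ModuleCat.{u} Rᵐᵒᵖ) :=
  ⋂₀ { D | IsDefinable R D ∧ X ⊆ D }

/-- `⟨X⟩` for classes of left modules. -/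
def genL (X : Set (ModuleCat.{u} R)) : Set (ModuleCat.{u} R) :=
  ⋂₀ { D | IsDefinableL R D ∧ X ⊆ D }

/-- `φ ≤_𝒳 ψ` for a class `𝒳` of right `R`-modules. -/
def LeOn (𝒳 : Set (ModuleCat.{u} Rᵐᵒᵖ)) {ι : Type} [Fintype ι] (φ ψ : PP R ι) : Prop :=
  ∀ M ∈ 𝒳, φ.sol M ⊆ ψ.sol M

/-- A pure embedding of right `R`-modules: an injective linear map which reflects
solution sets of pp formulas. -/
def IsPureEmb {M N : Type*} [AddCommGroup M] [Module Rᵐᵒᵖ M]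
    [AddCommGroup N] [Module Rᵐᵒᵖ N] (f : M →ₗ[Rᵐᵒᵖ] N) : Prop :=
  Function.Injective f ∧
    ∀ (ι : Type) (_ : Fintype ι) (φ : PP R ι) (a : ι → M),
      (fun i => f (a i)) ∈ φ.sol N → a ∈ φ.sol M

/-- A pure-injective module: every pure embedding out of it splits. -/
def IsPureInj (N : Type u) [AddCommGroup N] [Module Rᵐᵒᵖ N] : Prop :=
  ∀ (M : Type u) [AddCommGroup M] [Module Rᵐᵒᵖ M] (g : N →ₗ[Rᵐᵒᵖ] M),
    IsPureEmb R g → ∃ h : M →ₗ[Rᵐᵒᵖ] N, h.comp g = LinearMap.id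

/-- `N` is an elementary cogenerator for the definable subcategory `D`:
a pure-injective member of `D` such that every member of `D` purely embeds in a
direct power of `N`. -/
def IsElemCogen (D : Set (ModuleCat.{u} Rᵐᵒᵖ)) (N : ModuleCat.{u} Rᵐᵒᵖ) : Prop :=
  N ∈ D ∧ IsPureInj R N ∧
    ∀ M ∈ D, ∃ (I : Type u) (g : M →ₗ[Rᵐᵒᵖ] (I → N)), IsPureEmb R g

/-- A pure-injective hull of `X`: a minimal pure embedding into a pure-injective. -/
def IsPureInjHull {X H : Type u} [AddCommGroup X] [Module Rᵐᵒᵖ X]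
    [AddCommGroup H] [Module Rᵐᵒᵖ H] (h : X →ₗ[Rᵐᵒᵖ] H) : Prop :=
  IsPureEmb R h ∧ IsPureInj R H ∧
    ∀ (Y : Type u) [AddCommGroup Y] [Module Rᵐᵒᵖ Y] (g : H →ₗ[Rᵐᵒᵖ] Y),
      IsPureEmb R (g.comp h) → IsPureEmb R g

section RingHom

variable (f : R →+* S)

/-- Restriction of scalars of a (bundled) right `S`-module along `f : R →+* S`. -/
noncomputable def resMod (M : ModuleCat.{u} Sᵐᵒᵖ) : ModuleCat.{u} Rᵐᵒᵖ :=
  (ModuleCat.restrictScalars (RingHom.op f)).obj M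

/-- The (definable) restriction `C|_R` of a definable subcategory `C` of `Mod-S`
along `f : R → S` : the subcategory of `Mod-R` defined by all pp-pairs `φ/ψ` for
`R`-modules such that `f⁎φ/f⁎ψ` is closed on `C`. -/
def restrictSubcat (C : Set (ModuleCat.{u} Sᵐᵒᵖ)) : Set (ModuleCat.{u} Rᵐᵒᵖ) :=
  definedBy R { p : PPPair R | ∀ M ∈ C, (p.num.map f).sol M = (p.den.map f).sol M }

/-- The definable trace of `Mod-S` in `Mod-R` along `f`. -/
def DefTr : Set (ModuleCat.{u} Rᵐᵒᵖ) := restrictSubcat R S f Set.univ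

/-- The direct extension `D^S` of a definable subcategory `D` of `Mod-R`:
those `S`-modules whose restriction along `f` lies in `D`. -/
def directExt (D : Set (ModuleCat.{u} Rᵐᵒᵖ)) : Set (ModuleCat.{u} Sᵐᵒᵖ) :=
  { M | resMod R S f M ∈ D }

end RingHom

end MTM
-- Tensor product over a (possibly noncommutative) ring.
namespace MTM

open MulOpposite TensorProduct

universe x
variable (R : Type u) [Ring R] (S : Type u) [Ring S]

section Tensor

variable (M : Type u) [AddCommGroup M] [Module Rᵐᵒᵖ M]
variable (B : Type u) [AddCommGroup B] [Module R B]

/-- The subgroup of `M ⊗_ℤ B` of balancing relations. -/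
def tensorRel : Submodule ℤ (TensorProduct ℤ M B) :=
  Submodule.span ℤ
    { x | ∃ (r : R) (m : M) (b : B), x = (op r • m) ⊗ₜ[ℤ] b - m ⊗ₜ[ℤ] (r • b) }

/-- The tensor product `M ⊗_R B` of a right `R`-module and a left `R`-module,
as the quotient of `M ⊗_ℤ B` by the balancing relations. -/
abbrev RTensor : Type u := TensorProduct ℤ M B ⧸ tensorRel R M B

/-- `m ⊗ b` in `M ⊗_R B`. -/
noncomputable def rtmul (m : M) (b : B) : RTensor R M B := Submodule.Quotient.mk (m ⊗ₜ[ℤ] b)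

variable {M B}
variable {M' : Type u} [AddCommGroup M'] [Module Rᵐᵒᵖ M']
variable {B' : Type u} [AddCommGroup B'] [Module R B']

theorem rel_le_B (g : B →ₗ[R] B') :
    tensorRel R M B ≤
      (tensorRel R M B').comap (LinearMap.lTensor M g.toAddMonoidHom.toIntLinearMap) := by
  refine Submodule.span_le.mpr ?_
  rintro x ⟨r, m, b, rfl⟩
  show LinearMap.lTensor M g.toAddMonoidHom.toIntLinearMap ((op r • m) ⊗ₜ[ℤ] b - m ⊗ₜ[ℤ] (r • b)) ∈
    (tensorRel R M B' : Set (M ⊗[ℤ] B'))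
  simp only [SetLike.mem_coe, Submodule.mem_comap, map_sub, LinearMap.lTensor_tmul,
    AddMonoidHom.coe_toIntLinearMap, LinearMap.toAddMonoidHom_coe]
  rw [g.map_smul]
  exact Submodule.subset_span ⟨r, m, g b, rfl⟩

theorem rel_le_M (h : M →ₗ[Rᵐᵒᵖ] M') :
    tensorRel R M B ≤
      (tensorRel R M' B).comap (LinearMap.rTensor B h.toAddMonoidHom.toIntLinearMap) := by
  refine Submodule.span_le.mpr ?_
  rintro x ⟨r, m, b, rfl⟩
  show LinearMap.rTensor B h.toAddMonoidHom.toIntLinearMap ((op r • m) ⊗ₜ[ℤ] b - m ⊗ₜ[ℤ] (r • b)) ∈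
    (tensorRel R M' B : Set (M' ⊗[ℤ] B))
  simp only [SetLike.mem_coe, Submodule.mem_comap, map_sub, LinearMap.rTensor_tmul,
    AddMonoidHom.coe_toIntLinearMap, LinearMap.toAddMonoidHom_coe]
  rw [h.map_smul]
  exact Submodule.subset_span ⟨r, h m, b, rfl⟩

/-- Functoriality of `M ⊗_R -` in left `R`-module maps (as a `ℤ`-linear map). -/
noncomputable def mapB (g : B →ₗ[R] B') : RTensor R M B →ₗ[ℤ] RTensor R M B' :=
  Submodule.mapQ _ _ _ (rel_le_B R g)

/-- Functoriality of `- ⊗_R B` in right `R`-module maps (as a `ℤ`-linear map). -/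
noncomputable def mapM (h : M →ₗ[Rᵐᵒᵖ] M') : RTensor R M B →ₗ[ℤ] RTensor R M' B :=
  Submodule.mapQ _ _ _ (rel_le_M R h)

@[simp] theorem mapB_mk (g : B →ₗ[R] B') (y : TensorProduct ℤ M B) :
    mapB R g (Submodule.Quotient.mk y) =
      Submodule.Quotient.mk (LinearMap.lTensor M g.toAddMonoidHom.toIntLinearMap y) :=
  rfl

@[simp] theorem mapM_mk (h : M →ₗ[Rᵐᵒᵖ] M') (y : TensorProduct ℤ M B) :
    mapM R h (Submodule.Quotient.mk y) =
      Submodule.Quotient.mk (LinearMap.rTensor B h.toAddMonoidHom.toIntLinearMap y) :=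
  rfl

section SAction

variable [Module Sᵐᵒᵖ B] [SMulCommClass R Sᵐᵒᵖ B]

/-- The right action of `s : S` on an `(R,S)`-bimodule, as a left `R`-linear map. -/
def sEndo (s : Sᵐᵒᵖ) : B →ₗ[R] B where
  toFun b := s • b
  map_add' x y := smul_add s x y
  map_smul' r b := (smul_comm r s b).symm

variable (M B)

/-- The right `S`-action on `M ⊗_R B` as a ring homomorphism `Sᵐᵒᵖ → End_ℤ (M ⊗_R B)`. -/
noncomputable def rho : Sᵐᵒᵖ →+* Module.End ℤ (RTensor R M B) where
  toFun s := mapB R (sEndo R S (B := B) s)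
  map_one' := by
    refine Submodule.linearMap_qext _ (TensorProduct.ext' fun m b => ?_)
    show mapB R _ (Submodule.Quotient.mk (m ⊗ₜ[ℤ] b) : RTensor R M B) = (1 : Module.End ℤ (RTensor R M B)) (Submodule.Quotient.mk (m ⊗ₜ[ℤ] b) : RTensor R M B)
    simp only [LinearMap.comp_apply, Submodule.mkQ_apply, mapB_mk, LinearMap.lTensor_tmul]
    simp [sEndo]
  map_mul' s s' := by
    refine Submodule.linearMap_qext _ (TensorProduct.ext' fun m b => ?_)
    show mapB R _ (Submodule.Quotient.mk (m ⊗ₜ[ℤ] b) : RTensor R M B) = (mapB R _ * mapB R _ : Module.End ℤ (RTensor R M B)) (Submodule.Quotient.mk (m ⊗ₜ[ℤ] b) : RTensor R M B)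
    simp only [LinearMap.comp_apply, Submodule.mkQ_apply, mapB_mk, LinearMap.lTensor_tmul,
      Module.End.mul_apply]
    simp only [AddMonoidHom.coe_toIntLinearMap, LinearMap.toAddMonoidHom_coe]
    simp [sEndo, mul_smul]
  map_zero' := by
    refine Submodule.linearMap_qext _ (TensorProduct.ext' fun m b => ?_)
    show mapB R _ (Submodule.Quotient.mk (m ⊗ₜ[ℤ] b) : RTensor R M B) = (0 : Module.End ℤ (RTensor R M B)) (Submodule.Quotient.mk (m ⊗ₜ[ℤ] b) : RTensor R M B)
    simp only [LinearMap.comp_apply, Submodule.mkQ_apply, mapB_mk, LinearMap.lTensor_tmul]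
    simp [sEndo]
  map_add' s s' := by
    refine Submodule.linearMap_qext _ (TensorProduct.ext' fun m b => ?_)
    show mapB R _ (Submodule.Quotient.mk (m ⊗ₜ[ℤ] b) : RTensor R M B) = (mapB R _ + mapB R _ : Module.End ℤ (RTensor R M B)) (Submodule.Quotient.mk (m ⊗ₜ[ℤ] b) : RTensor R M B)
    simp only [LinearMap.comp_apply, Submodule.mkQ_apply, mapB_mk, LinearMap.lTensor_tmul,
      LinearMap.add_apply]
    simp only [AddMonoidHom.coe_toIntLinearMap, LinearMap.toAddMonoidHom_coe]
    simp [sEndo, add_smul, TensorProduct.tmul_add]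

/-- The right `S`-module structure on `M ⊗_R B` for an `(R,S)`-bimodule `B`. -/
noncomputable instance instModS : Module Sᵐᵒᵖ (RTensor R M B) :=
  Module.compHom _ (rho R S M B)

theorem smul_mk (s : Sᵐᵒᵖ) (y : TensorProduct ℤ M B) :
    s • (Submodule.Quotient.mk y : RTensor R M B) =
      Submodule.Quotient.mk
        (LinearMap.lTensor M ((sEndo R S (B := B) s).toAddMonoidHom.toIntLinearMap) y) :=
  rfl

@[simp] theorem smul_rtmul (s : Sᵐᵒᵖ) (m : M) (b : B) :
    s • rtmul R M B m b = rtmul R M B m (s • b) :=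
  rfl

end SAction

end Tensor

end MTM
namespace MTM

open MulOpposite TensorProduct

variable (R : Type u) [Ring R] (S : Type u) [Ring S]

section TensorMaps

variable (M : Type u) [AddCommGroup M] [Module Rᵐᵒᵖ M]
variable {M' : Type u} [AddCommGroup M'] [Module Rᵐᵒᵖ M']
variable (B : Type u) [AddCommGroup B] [Module R B] [Module Sᵐᵒᵖ B] [SMulCommClass R Sᵐᵒᵖ B]
variable {B' : Type u} [AddCommGroup B'] [Module R B'] [Module Sᵐᵒᵖ B'] [SMulCommClass R Sᵐᵒᵖ B']

/-- Functoriality of `M ⊗_R -` in maps of `(R,S)`-bimodules, as a map of right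
`S`-modules. -/
noncomputable def mapBS (g : B →ₗ[R] B') (hg : ∀ (s : Sᵐᵒᵖ) (b : B), g (s • b) = s • g b) :
    RTensor R M B →ₗ[Sᵐᵒᵖ] RTensor R M B' where
  toFun := mapB R g
  map_add' := map_add _
  map_smul' s x := by
    obtain ⟨y, rfl⟩ := Submodule.Quotient.mk_surjective _ x
    show mapB R g (s • Submodule.Quotient.mk y) = s • mapB R g (Submodule.Quotient.mk y)
    rw [smul_mk R S, mapB_mk, mapB_mk, smul_mk R S,
      ← LinearMap.comp_apply, ← LinearMap.comp_apply, ← LinearMap.lTensor_comp,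
      ← LinearMap.lTensor_comp]
    have hcomp : g.toAddMonoidHom.toIntLinearMap ∘ₗ
          (sEndo R S (B := B) s).toAddMonoidHom.toIntLinearMap =
        (sEndo R S (B := B') s).toAddMonoidHom.toIntLinearMap ∘ₗ
          g.toAddMonoidHom.toIntLinearMap := by
      ext b
      exact hg s b
    rw [hcomp]

/-- Functoriality of `- ⊗_R B` in maps of right `R`-modules, as a map of right
`S`-modules. -/
noncomputable def mapMS (h : M →ₗ[Rᵐᵒᵖ] M') :
    RTensor R M B →ₗ[Sᵐᵒᵖ] RTensor R M' B where
  toFun := mapM R h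
  map_add' := map_add _
  map_smul' s x := by
    obtain ⟨y, rfl⟩ := Submodule.Quotient.mk_surjective _ x
    show mapM R h (s • Submodule.Quotient.mk y) = s • mapM R h (Submodule.Quotient.mk y)
    rw [smul_mk R S, mapM_mk, mapM_mk, smul_mk R S,
      ← LinearMap.comp_apply, ← LinearMap.comp_apply, LinearMap.rTensor_comp_lTensor,
      LinearMap.lTensor_comp_rTensor]

end TensorMaps

section Canonical

variable (M : Type u) [AddCommGroup M] [Module Rᵐᵒᵖ M]

/-- The canonical map `M ⊗_R (∏ᵢ Lᵢ) → ∏ᵢ (M ⊗_R Lᵢ)` for a family of left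
`R`-modules, as a `ℤ`-linear map. -/
noncomputable def canonicalL {ι' : Type u} (L : ι' → Type u)
    [∀ i, AddCommGroup (L i)] [∀ i, Module R (L i)] :
    RTensor R M (∀ i, L i) →ₗ[ℤ] ∀ i, RTensor R M (L i) :=
  LinearMap.pi fun i => mapB R (LinearMap.proj i)

/-- The canonical map `M ⊗_R (∏ᵢ Lᵢ) → ∏ᵢ (M ⊗_R Lᵢ)` for a family of
`(R,S)`-bimodules, as a map of right `S`-modules. -/
noncomputable def canonicalB {ι' : Type u} (L : ι' → Type u)
    [∀ i, AddCommGroup (L i)] [∀ i, Module R (L i)] [∀ i, Module Sᵐᵒᵖ (L i)]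
    [∀ i, SMulCommClass R Sᵐᵒᵖ (L i)] :
    RTensor R M (∀ i, L i) →ₗ[Sᵐᵒᵖ] ∀ i, RTensor R M (L i) :=
  LinearMap.pi fun i => mapBS R S M (∀ j, L j) (LinearMap.proj i) (fun _ _ => rfl)

/-- The canonical map `(∏_λ M_λ) ⊗_R B → ∏_λ (M_λ ⊗_R B)` for a family of right
`R`-modules and an `(R,S)`-bimodule `B`, as a map of right `S`-modules. -/
noncomputable def canonicalM {ι' : Type u} (N : ι' → Type u)
    [∀ i, AddCommGroup (N i)] [∀ i, Module Rᵐᵒᵖ (N i)]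
    (B : Type u) [AddCommGroup B] [Module R B] [Module Sᵐᵒᵖ B] [SMulCommClass R Sᵐᵒᵖ B] :
    RTensor R (∀ i, N i) B →ₗ[Sᵐᵒᵖ] ∀ i, RTensor R (N i) B :=
  LinearMap.pi fun i => mapMS R S (∀ j, N j) B (LinearMap.proj i)

end Canonical

section UnitMap

variable (M : Type u) [AddCommGroup M] [Module Rᵐᵒᵖ M]
variable (B : Type u) [AddCommGroup B] [Module R B] [Module Rᵐᵒᵖ B] [SMulCommClass R Rᵐᵒᵖ B]

/-- For an `(R,R)`-bimodule `B` and a central-ish element `e` (e.g. `1 ∈ S` for a ring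
extension `R → S`), the canonical map `M → M ⊗_R B`, `a ↦ a ⊗ e`, as a map of right
`R`-modules. -/
noncomputable def unitMap (e : B) (he : ∀ r : R, r • e = op r • e) :
    M →ₗ[Rᵐᵒᵖ] RTensor R M B where
  toFun m := rtmul R M B m e
  map_add' m m' := by
    show Submodule.Quotient.mk _ = Submodule.Quotient.mk _ + Submodule.Quotient.mk _
    rw [← Submodule.Quotient.mk_add, TensorProduct.add_tmul]
  map_smul' r m := by
    show rtmul R M B (r • m) e = r • rtmul R M B m e
    rw [smul_rtmul]
    rw [rtmul, rtmul, Submodule.Quotient.eq]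
    have : (r • e : B) = (r.unop : R) • e := (he r.unop).symm
    rw [this]
    exact Submodule.subset_span ⟨r.unop, m, e, by rw [op_unop]⟩

end UnitMap

end MTM
namespace MTM

open MulOpposite

variable (R : Type u) [Ring R] (S : Type u) [Ring S]

/-! ### pp formulas for `(R,S)`-bimodules -/

/-- The action of a formal coefficient `∑ (r,s)` of the bimodule language on an
element of an `(R,S)`-bimodule: `b ↦ ∑ r b s`. -/
def cAct (c : List (R × S)) {B : Type v} [AddCommGroup B] [Module R B] [Module Sᵐᵒᵖ B]
    (b : B) : B :=
  (c.map fun p => p.1 • (op p.2 • b)).sum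

/-- A pp formula for `(R,S)`-bimodules (equivalently, for right `Rᵒᵖ ⊗ S`-modules):
coefficients are formal sums of pairs `(r,s)`, acting by `x ↦ ∑ r x s`. -/
structure BiPP (ι : Type) : Type (max u 1) where
  κ : Type
  ε : Type
  [fintκ : Fintype κ]
  [fintε : Fintype ε]
  A : Matrix ι ε (List (R × S))
  B : Matrix κ ε (List (R × S))

attribute [instance] BiPP.fintκ BiPP.fintε

variable {R S} in
/-- Solution set of a bimodule pp formula in an `(R,S)`-bimodule. -/
def BiPP.sol {ι : Type} [Fintype ι] (θ : BiPP R S ι) (Bm : Type v) [AddCommGroup Bm]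
    [Module R Bm] [Module Sᵐᵒᵖ Bm] : Set (ι → Bm) :=
  { a | ∃ b : θ.κ → Bm, ∀ j : θ.ε,
      (∑ i, cAct R S (θ.A i j) (a i)) + (∑ k, cAct R S (θ.B k j) (b k)) = 0 }

/-- A bundled `(R,S)`-bimodule. -/
structure Bimod : Type (u + 1) where
  carrier : Type u
  [addCommGroup : AddCommGroup carrier]
  [modR : Module R carrier]
  [modSop : Module Sᵐᵒᵖ carrier]
  [smulComm : SMulCommClass R Sᵐᵒᵖ carrier]

attribute [instance] Bimod.addCommGroup Bimod.modR Bimod.modSop Bimod.smulComm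

instance : CoeSort (Bimod R S) (Type u) := ⟨Bimod.carrier⟩

/-- Bundling an `(R,S)`-bimodule. -/
def Bimod.of (B : Type u) [AddCommGroup B] [Module R B] [Module Sᵐᵒᵖ B]
    [SMulCommClass R Sᵐᵒᵖ B] : Bimod R S :=
  ⟨B⟩

/-- A pp-pair for `(R,S)`-bimodules. -/
structure BiPPPair : Type (max u 1) where
  n : ℕ
  num : BiPP R S (Fin n)
  den : BiPP R S (Fin n)
  le : ∀ Bm : Bimod R S, den.sol Bm ⊆ num.sol Bm

variable {R S} in
/-- Closedness of a bimodule pp-pair on a bimodule. -/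
def BiPPPair.ClosedOn (p : BiPPPair R S) (Bm : Type v) [AddCommGroup Bm] [Module R Bm]
    [Module Sᵐᵒᵖ Bm] : Prop :=
  p.num.sol Bm = p.den.sol Bm

/-- The class of bimodules defined by closure of a set of bimodule pp-pairs. -/
def biDefinedBy (Φ : Set (BiPPPair R S)) : Set (Bimod R S) :=
  { Bm | ∀ p ∈ Φ, p.ClosedOn Bm }

/-- Definable subcategories of the category `R-Mod-S` of `(R,S)`-bimodules. -/
def IsDefinableBi (𝓑 : Set (Bimod R S)) : Prop :=
  ∃ Φ : Set (BiPPPair R S), 𝓑 = biDefinedBy R S Φ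

/-- The smallest definable subcategory of `R-Mod-S` containing `X`. -/
def genBi (X : Set (Bimod R S)) : Set (Bimod R S) :=
  ⋂₀ { 𝓑 | IsDefinableBi R S 𝓑 ∧ X ⊆ 𝓑 }

/-- `θ ≤_𝓑 θ'` for a class `𝓑` of bimodules. -/
def BiLeOn (𝓑 : Set (Bimod R S)) {ι : Type} [Fintype ι] (θ θ' : BiPP R S ι) : Prop :=
  ∀ Bm ∈ 𝓑, θ.sol Bm ⊆ θ'.sol Bm

/-! ### Partitioned tuples, `(σ:φ)` and atomicity with respect to a bimodule -/

/-- The index type of a `ν`-partitioned tuple: `k` blocks, the `t`-th of size `ν t`. -/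
abbrev PIdx {k : ℕ} (ν : Fin k → ℕ) : Type := (t : Fin k) × Fin (ν t)

/-- The tensor product of matching partitioned tuples: the `k`-tuple
`(ā₁ ⊗ b̄₁, …, ā_k ⊗ b̄_k)` where `ā_t ⊗ b̄_t = ∑_j a_{tj} ⊗ b_{tj}`. -/
noncomputable def ptensor (M : Type u) [AddCommGroup M] [Module Rᵐᵒᵖ M] (B : Type u)
    [AddCommGroup B] [Module R B] {k : ℕ} {ν : Fin k → ℕ}
    (a : PIdx ν → M) (b : PIdx ν → B) : Fin k → RTensor R M B :=
  fun t => ∑ j : Fin (ν t), rtmul R M B (a ⟨t, j⟩) (b ⟨t, j⟩)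

variable {R}

/-- The pp-type of `ā` in `M` is generated by `φ`: `pp^M(ā) = {ψ : φ ≤ ψ}`. -/
def GeneratedBy {ι : Type} [Fintype ι] {M : Type u} [AddCommGroup M] [Module Rᵐᵒᵖ M]
    (a : ι → M) (φ : PP R ι) : Prop :=
  ∀ ψ : PP R ι, a ∈ ψ.sol M ↔ φ.Le ψ

/-- The pp-type of `ā` in `M` is `𝒳`-generated by `φ`: `pp^M(ā) = {ψ : φ ≤_𝒳 ψ}`. -/
def GeneratedByOn (𝒳 : Set (ModuleCat.{u} Rᵐᵒᵖ)) {ι : Type} [Fintype ι] {M : Type u}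
    [AddCommGroup M] [Module Rᵐᵒᵖ M] (a : ι → M) (φ : PP R ι) : Prop :=
  ∀ ψ : PP R ι, a ∈ ψ.sol M ↔ LeOn R 𝒳 φ ψ

variable (R)

/-- An assignment `(σ, φ) ↦ (σ:φ)` of a bimodule pp formula to each pp formula `σ`
for right `S`-modules (in `k` free variables) and each matching partitioned pp
formula `φ` for right `R`-modules. -/
def ColonAsgn : Type (max u 1) :=
  ∀ (k : ℕ) (ν : Fin k → ℕ), PP S (Fin k) → PP R (PIdx ν) → BiPP R S (PIdx ν)

/-- The characterizing property of the assignment `(σ, φ) ↦ (σ:φ)`: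
(1) if `ā ∈ φ(M)` and `b̄ ∈ (σ:φ)(B)` then `ā ⊗ b̄ ∈ σ(M ⊗_R B)`;
(2) if `pp^M(ā)` is generated by `φ` then `ā ⊗ b̄ ∈ σ(M ⊗_R B)` iff `b̄ ∈ (σ:φ)(B)`. -/
def ColonSpec (c : ColonAsgn R S) : Prop :=
  ∀ (k : ℕ) (ν : Fin k → ℕ) (σ : PP S (Fin k)) (φ : PP R (PIdx ν))
    (M : Type u) [AddCommGroup M] [Module Rᵐᵒᵖ M]
    (Bm : Type u) [AddCommGroup Bm] [Module R Bm] [Module Sᵐᵒᵖ Bm]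
    [SMulCommClass R Sᵐᵒᵖ Bm] (a : PIdx ν → M) (b : PIdx ν → Bm),
    (a ∈ φ.sol M → b ∈ (c k ν σ φ).sol Bm →
      ptensor R M Bm a b ∈ σ.sol (RTensor R M Bm)) ∧
    (GeneratedBy a φ →
      (ptensor R M Bm a b ∈ σ.sol (RTensor R M Bm) ↔ b ∈ (c k ν σ φ).sol Bm))

/-- `M` is atomic with respect to the `(R,S)`-bimodule `B` (relative to a choice `c`
of the assignment `(σ,φ) ↦ (σ:φ)`): for every partitioned finite tuple `ā` from `M`
and every pp formula `σ` for right `S`-modules there is `φ ∈ pp^M(ā)` such that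
`(σ:φ)(B)` is the largest among the `(σ:ψ)(B)` with `ψ ∈ pp^M(ā)`. -/
def AtomicWrt (c : ColonAsgn R S) (M : Type u) [AddCommGroup M] [Module Rᵐᵒᵖ M]
    (Bm : Type u) [AddCommGroup Bm] [Module R Bm] [Module Sᵐᵒᵖ Bm] : Prop :=
  ∀ (k : ℕ) (ν : Fin k → ℕ) (σ : PP S (Fin k)) (a : PIdx ν → M),
    ∃ φ : PP R (PIdx ν), a ∈ φ.sol M ∧
      ∀ ψ : PP R (PIdx ν), a ∈ ψ.sol M → (c k ν σ ψ).sol Bm ⊆ (c k ν σ φ).sol Bm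

/-! ### Mittag-Leffler modules, atomic modules -/

/-- `M` is Mittag-Leffler: the canonical map `M ⊗_R ∏ᵢ Lᵢ → ∏ᵢ (M ⊗_R Lᵢ)` is
injective for every family of left `R`-modules. -/
def IsML (M : Type u) [AddCommGroup M] [Module Rᵐᵒᵖ M] : Prop :=
  ∀ (ι' : Type u) (L : ι' → Type u) (_ : ∀ i, AddCommGroup (L i))
    (_ : ∀ i, Module R (L i)), Function.Injective (canonicalL R M L)

/-- `M` is `𝒳`-Mittag-Leffler for a class `𝒳` of left `R`-modules. -/
def IsMLOn (𝒳 : Set (ModuleCat.{u} R)) (M : Type u) [AddCommGroup M] [Module Rᵐᵒᵖ M] :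
    Prop :=
  ∀ (ι' : Type u) (L : ι' → Type u) (_ : ∀ i, AddCommGroup (L i))
    (_ : ∀ i, Module R (L i)),
    (∀ i, ModuleCat.of R (L i) ∈ 𝒳) → Function.Injective (canonicalL R M L)

/-- `M` is `D`-atomic: the pp-type of every finite tuple from `M` is `D`-finitely
generated. -/
def AtomicOn (D : Set (ModuleCat.{u} Rᵐᵒᵖ)) (M : Type u) [AddCommGroup M]
    [Module Rᵐᵒᵖ M] : Prop :=
  ∀ (n : ℕ) (a : Fin n → M), ∃ φ : PP R (Fin n), GeneratedByOn D a φ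

/-- The elementary dual `⟨K⟩ᵈ ⊆ Mod-R` of the definable subcategory of `R-Mod`
generated by a class `K` of left `R`-modules: it is defined by the pp-pairs for right
`R`-modules whose (elementary) dual pp-pair is closed on `⟨K⟩`. -/
def dualCat (K : Set (ModuleCat.{u} R)) : Set (ModuleCat.{u} Rᵐᵒᵖ) :=
  definedBy R { p : PPPair R |
    ∀ L ∈ genL R K, (p.num.dual).solL L = (p.den.dual).solL L }

/-! ### Pure projectivity, finite genericity, pure cogenerators -/

/-- A left `R`-module is pure-projective if it is a direct summand of a direct sum of
finitely presented left `R`-modules. -/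
def IsPureProjL (B : Type u) [AddCommGroup B] [Module R B] : Prop :=
  ∃ (ι : Type u) (_ : DecidableEq ι) (F : ι → Type u) (_ : ∀ i, AddCommGroup (F i))
    (_ : ∀ i, Module R (F i)) (_ : ∀ i, Module.FinitePresentation R (F i))
    (e : B →ₗ[R] DirectSum ι F) (p : DirectSum ι F →ₗ[R] B), p.comp e = LinearMap.id

/-- `M` is finitely generic in the definable subcategory `D`: for every pp formula
`φ` there is a tuple from `M` whose pp-type is `D`-generated by `φ`. -/
def FinGeneric (D : Set (ModuleCat.{u} Rᵐᵒᵖ)) (M : Type u) [AddCommGroup M]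
    [Module Rᵐᵒᵖ M] : Prop :=
  ModuleCat.of Rᵐᵒᵖ M ∈ D ∧
    ∀ (ι : Type) (_ : Fintype ι) (φ : PP R ι), ∃ a : ι → M, GeneratedByOn D a φ

variable {R S}

/-- The pp-type of a tuple in a bimodule is `𝓑`-generated by `θ`. -/
def BiGeneratedByOn (𝓑 : Set (Bimod R S)) {ι : Type} [Fintype ι] {Bm : Type u}
    [AddCommGroup Bm] [Module R Bm] [Module Sᵐᵒᵖ Bm] (b : ι → Bm) (θ : BiPP R S ι) :
    Prop :=
  ∀ θ' : BiPP R S ι, b ∈ θ'.sol Bm ↔ BiLeOn R S 𝓑 θ θ'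

variable (R S)

/-- A bimodule is finitely generic in a definable subcategory `𝓑` of `R-Mod-S`. -/
def FinGenericBi (𝓑 : Set (Bimod R S)) (Bm : Type u) [AddCommGroup Bm] [Module R Bm]
    [Module Sᵐᵒᵖ Bm] [SMulCommClass R Sᵐᵒᵖ Bm] : Prop :=
  Bimod.of R S Bm ∈ 𝓑 ∧
    ∀ (ι : Type) (_ : Fintype ι) (θ : BiPP R S ι), ∃ b : ι → Bm, BiGeneratedByOn 𝓑 b θ

end MTM
namespace MTM

open MulOpposite

variable (R : Type u) [Ring R] (S : Type u) [Ring S]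

/-! ### Tensor extension of definable subcategories -/

section TensorExt

variable (B : Type u) [AddCommGroup B] [Module R B] [Module Sᵐᵒᵖ B] [SMulCommClass R Sᵐᵒᵖ B]

/-- The set `{M ⊗_R B : M ∈ D}` of right `S`-modules. -/
noncomputable def tensorExtSet (D : Set (ModuleCat.{u} Rᵐᵒᵖ)) : Set (ModuleCat.{u} Sᵐᵒᵖ) :=
  { N | ∃ M ∈ D, N = ModuleCat.of Sᵐᵒᵖ (RTensor R M B) }

/-- The tensor extension `D ⊗_R B`: the definable subcategory of `Mod-S` generated by
`{M ⊗_R B : M ∈ D}`. -/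
noncomputable def tensorExt (D : Set (ModuleCat.{u} Rᵐᵒᵖ)) : Set (ModuleCat.{u} Sᵐᵒᵖ) :=
  gen S (tensorExtSet R S B D)

end TensorExt

/-- `D ⊗ 𝓑` for a definable subcategory `D` of `Mod-R` and a definable subcategory
`𝓑` of `R-Mod-S`: the definable subcategory of `Mod-S` generated by the modules
`M ⊗_R B` with `M ∈ D`, `B ∈ 𝓑`. -/
noncomputable def tensorProd (D : Set (ModuleCat.{u} Rᵐᵒᵖ)) (𝓑 : Set (Bimod R S)) :
    Set (ModuleCat.{u} Sᵐᵒᵖ) :=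
  gen S { N | ∃ M ∈ D, ∃ Bm ∈ 𝓑, N = ModuleCat.of Sᵐᵒᵖ (RTensor R M Bm) }

/-! ### Directed colimits -/

open CategoryTheory CategoryTheory.Limits in
/-- `M` is a directed colimit of modules satisfying `P`. -/
def IsDirectedColimitOf (M : ModuleCat.{u} Rᵐᵒᵖ) (P : ModuleCat.{u} Rᵐᵒᵖ → Prop) :
    Prop :=
  ∃ (J : Type u) (_ : Preorder J) (_ : IsDirected J (· ≤ ·)) (_ : Nonempty J)
    (F : J ⥤ ModuleCat.{u} Rᵐᵒᵖ) (c : Cocone F),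
    Nonempty (IsColimit c) ∧ Nonempty (c.pt ≅ M) ∧ ∀ j, P (F.obj j)

/-! ### Elementary embeddings of rings -/

open FirstOrder in
/-- `f : R →+* S` is an elementary embedding of rings: there is a model-theoretic
elementary embedding (for the first-order language of rings) whose underlying
function is `f`.  (Elementary embeddings preserve and reflect all first-order
formulas at all tuples of parameters from `R`.) -/
def IsElemRingEmb (f : R →+* S) : Prop :=
  letI := FirstOrder.Ring.compatibleRingOfRing R
  letI := FirstOrder.Ring.compatibleRingOfRing S
  ∃ F : Language.ring.ElementaryEmbedding R S, ∀ r : R, F r = f r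

/-! ### Bimodule structures along a ring homomorphism -/

section AlongHom

variable (f : R →+* S)

/-- The left `R`-module structure on `S` along `f`. -/
def modLeft : Module R S := Module.compHom S f

/-- The right `R`-module structure on `S` along `f`. -/
def modRight : Module Rᵐᵒᵖ S := Module.compHom S (RingHom.op f)

/-- `S` is an `(R,S)`-bimodule along `f`. -/
theorem smulComm_RS :
    letI := modLeft R S f
    SMulCommClass R Sᵐᵒᵖ S := by
  letI := modLeft R S f
  constructor
  intro r s x
  show f r * (x * s.unop) = (f r * x) * s.unop
  rw [mul_assoc]

/-- `S` is an `(R,R)`-bimodule along `f`. -/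
theorem smulComm_RR :
    letI := modLeft R S f
    letI := modRight R S f
    SMulCommClass R Rᵐᵒᵖ S := by
  letI := modLeft R S f
  letI := modRight R S f
  constructor
  intro r r' x
  show f r * (x * f r'.unop) = (f r * x) * f r'.unop
  rw [mul_assoc]

end AlongHom

end MTM
namespace MTM

open MulOpposite

variable (R : Type u) [Ring R] (S : Type u) [Ring S]

/-- A pure embedding of `(R,S)`-bimodules: an injective map of bimodules which
reflects solution sets of bimodule pp formulas. -/
def IsBiPureEmb {B B' : Type u} [AddCommGroup B] [Module R B] [Module Sᵐᵒᵖ B]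
    [AddCommGroup B'] [Module R B'] [Module Sᵐᵒᵖ B']
    (g : B →ₗ[R] B') (_ : ∀ (s : Sᵐᵒᵖ) (b : B), g (s • b) = s • g b) : Prop :=
  Function.Injective g ∧
    ∀ (ι : Type) (_ : Fintype ι) (θ : BiPP R S ι) (a : ι → B),
      (fun i => g (a i)) ∈ θ.sol B' → a ∈ θ.sol B

/-- The ring `S`, viewed as an `(R,S)`-bimodule (and as an `(R,R)`-bimodule) along a
ring homomorphism `f : R →+* S`. -/
def SAlong (f : R →+* S) : Type u := S

namespace SAlong

variable (f : R →+* S)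

instance : AddCommGroup (SAlong R S f) := inferInstanceAs (AddCommGroup S)
instance : Module R (SAlong R S f) := Module.compHom S f
instance : Module Sᵐᵒᵖ (SAlong R S f) := inferInstanceAs (Module Sᵐᵒᵖ S)
instance : Module Rᵐᵒᵖ (SAlong R S f) := Module.compHom S (RingHom.op f)

instance : SMulCommClass R Sᵐᵒᵖ (SAlong R S f) := smulComm_RS R S f

instance : SMulCommClass R Rᵐᵒᵖ (SAlong R S f) := smulComm_RR R S f

/-- The element `1 ∈ S`. -/
def one : SAlong R S f := (1 : S)

theorem smul_one : ∀ r : R, r • (one R S f) = op r • (one R S f) := by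
  intro r
  show f r * (1 : S) = (1 : S) * f r
  rw [mul_one, one_mul]

end SAlong

end MTM
namespace MTM

namespace Pf

open MulOpposite Filter

variable {T : Type u} [Ring T]

/-- Evaluate a formal linear expression (list of coefficient/variable pairs). -/
def evalEq {V : Type*} {X : Type*} [AddCommGroup X] [Module Tᵐᵒᵖ X]
    (l : List (T × V)) (x : V → X) : X :=
  (l.map fun p => op p.1 • x p.2).sum

theorem map_evalEq {V : Type*} {X Y : Type*} [AddCommGroup X] [Module Tᵐᵒᵖ X]
    [AddCommGroup Y] [Module Tᵐᵒᵖ Y] (h : X →ₗ[Tᵐᵒᵖ] Y) (l : List (T × V)) (x : V → X) :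
    h (evalEq l x) = evalEq l (fun v => h (x v)) := by
  unfold evalEq
  rw [map_list_sum, List.map_map]
  exact congrArg List.sum (List.map_congr_left fun p _ => by simp)

theorem evalEq_apply {V K : Type*} {X : Type*} [AddCommGroup X] [Module Tᵐᵒᵖ X]
    (l : List (T × V)) (x : V → K → X) (k : K) :
    evalEq l x k = evalEq l (fun v => x v k) :=
  map_evalEq (LinearMap.proj k) l x

theorem sol_hom {ι : Type} [Fintype ι] (φ : PP T ι) {X Y : Type*}
    [AddCommGroup X] [Module Tᵐᵒᵖ X] [AddCommGroup Y] [Module Tᵐᵒᵖ Y]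
    (g : X →ₗ[Tᵐᵒᵖ] Y) {a : ι → X} (ha : a ∈ φ.sol X) : (fun i => g (a i)) ∈ φ.sol Y := by
  obtain ⟨b, hb⟩ := ha
  refine ⟨fun k => g (b k), fun j => ?_⟩
  have := congrArg g (hb j)
  simpa [map_add, map_sum, map_smul] using this

theorem sol_pi {ι : Type} [Fintype ι] (φ : PP T ι) {K : Type*} (X : Type*)
    [AddCommGroup X] [Module Tᵐᵒᵖ X] (a : ι → K → X) :
    a ∈ φ.sol (K → X) ↔ ∀ k, (fun j => a j k) ∈ φ.sol X := by
  constructor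
  · intro ha k
    exact sol_hom φ (LinearMap.proj k) ha
  · intro h
    choose b hb using h
    refine ⟨fun κ => fun k => b k κ, fun j => ?_⟩
    funext k
    simpa [Finset.sum_apply, Pi.smul_apply, Pi.add_apply, Pi.zero_apply] using hb k j

/-- Algebraic compactness: every finitely satisfiable system of linear
equations with parameters is satisfiable. -/
def AlgCompact (N : Type u) [AddCommGroup N] [Module Tᵐᵒᵖ N] : Prop :=
  ∀ (V E : Type u) (c : E → List (T × V)) (d : E → N),
    (∀ s : Finset E, ∃ x : V → N, ∀ e ∈ s, evalEq (c e) x + d e = 0) →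
    ∃ x : V → N, ∀ e, evalEq (c e) x + d e = 0

end Pf

namespace Pf

open MulOpposite Filter

variable {T : Type u} [Ring T]

section RedPow

variable {I : Type u} (F : Filter I) (N : Type u) [AddCommGroup N] [Module Tᵐᵒᵖ N]

/-- The submodule of eventually-zero families. -/
def nullSub : Submodule Tᵐᵒᵖ (I → N) where
  carrier := {x | ∀ᶠ i in F, x i = 0}
  add_mem' := fun hx hy => (hx.and hy).mono (by rintro i ⟨h1, h2⟩; simp [h1, h2])
  zero_mem' := Eventually.of_forall (fun _ => rfl)
  smul_mem' := fun r x hx => hx.mono (fun i h => by simp [h])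

/-- The reduced power of `N` along a filter. -/
abbrev RedPow : Type u := (I → N) ⧸ nullSub (T := T) F N

theorem sol_redpow_intro {ι : Type} [Fintype ι] (φ : PP T ι) (x : ι → I → N)
    (h : ∀ᶠ i in F, (fun j => x j i) ∈ φ.sol N) :
    (fun j => (nullSub (T := T) F N).mkQ (x j)) ∈ φ.sol (RedPow F N) := by
  classical
  set w : I → φ.κ → N := fun i =>
    if hi : (fun j => x j i) ∈ φ.sol N then hi.choose else 0 with hw
  refine ⟨fun k => (nullSub (T := T) F N).mkQ (fun i => w i k), fun e => ?_⟩
  have key : (∑ j, op (φ.A j e) • (nullSub (T := T) F N).mkQ (x j)) +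
      ∑ k, op (φ.B k e) • (nullSub (T := T) F N).mkQ (fun i => w i k)
      = (nullSub (T := T) F N).mkQ
        (fun i => (∑ j, op (φ.A j e) • x j i) + ∑ k, op (φ.B k e) • w i k) := by
    simp only [← map_smul, ← map_sum, ← map_add]
    congr 1
    funext i
    simp [Finset.sum_apply, Pi.smul_apply]
  rw [key]
  rw [Submodule.mkQ_apply, Submodule.Quotient.mk_eq_zero]
  refine h.mono (fun i hi => ?_)
  show (∑ j, op (φ.A j e) • x j i) + ∑ k, op (φ.B k e) • w i k = 0
  have hwi : w i = hi.choose := dif_pos hi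
  rw [hwi]
  simpa using hi.choose_spec e

theorem sol_redpow_elim {ι : Type} [Fintype ι] (φ : PP T ι) (x : ι → I → N)
    (h : (fun j => (nullSub (T := T) F N).mkQ (x j)) ∈ φ.sol (RedPow F N)) :
    ∀ᶠ i in F, (fun j => x j i) ∈ φ.sol N := by
  obtain ⟨b, hb⟩ := h
  have hsurj : ∀ k, ∃ y : I → N, (nullSub (T := T) F N).mkQ y = b k := fun k =>
    Submodule.Quotient.mk_surjective _ (b k)
  choose y hy using hsurj
  have he : ∀ e : φ.ε, ∀ᶠ i in F,
      (∑ j, op (φ.A j e) • x j i) + ∑ k, op (φ.B k e) • y k i = 0 := by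
    intro e
    have hb' := hb e
    simp only [← hy, ← map_smul, ← map_sum, ← map_add] at hb'
    rw [Submodule.mkQ_apply, Submodule.Quotient.mk_eq_zero] at hb'
    refine hb'.mono (fun i hi => ?_)
    simpa [Finset.sum_apply, Pi.smul_apply] using hi
  exact (eventually_all.2 he).mono (fun i hi => ⟨fun k => y k i, hi⟩)

/-- The diagonal embedding into a reduced power. -/
def diag : N →ₗ[Tᵐᵒᵖ] RedPow (T := T) F N :=
  (nullSub (T := T) F N).mkQ.comp (LinearMap.pi fun _ => LinearMap.id)

theorem diag_apply (a : N) : diag (T := T) F N a = (nullSub (T := T) F N).mkQ (fun _ => a) := rfl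

theorem diag_pure [F.NeBot] : IsPureEmb T (diag (T := T) F N) := by
  constructor
  · intro a a' h
    have : diag (T := T) F N (a - a') = 0 := by rw [map_sub, h, sub_self]
    rw [diag_apply, Submodule.mkQ_apply, Submodule.Quotient.mk_eq_zero] at this
    obtain ⟨i, hi⟩ := this.exists
    exact sub_eq_zero.1 hi
  · intro ι _ φ a h
    have h' : (fun j => (nullSub (T := T) F N).mkQ ((fun j' => fun _ => a j') j)) ∈
        φ.sol (RedPow (T := T) F N) := h
    obtain ⟨i, hi⟩ := (sol_redpow_elim F N φ _ h').exists
    exact hi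

theorem closedOn_redpow (p : PPPair T) (hp : p.ClosedOn N) :
    p.ClosedOn (RedPow (T := T) F N) := by
  refine Set.Subset.antisymm ?_ (p.le _)
  intro a ha
  have hsurj : ∀ j, ∃ y : I → N, (nullSub (T := T) F N).mkQ y = a j := fun j =>
    Submodule.Quotient.mk_surjective _ (a j)
  choose x hx using hsurj
  have ha' : (fun j => (nullSub (T := T) F N).mkQ (x j)) ∈ p.num.sol (RedPow (T := T) F N) := by
    have : (fun j => (nullSub (T := T) F N).mkQ (x j)) = a := funext hx
    rw [this]; exact ha
  have hev := sol_redpow_elim F N p.num x ha'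
  have hev' : ∀ᶠ i in F, (fun j => x j i) ∈ p.den.sol N := by
    refine hev.mono (fun i hi => ?_)
    rw [← hp]; exact hi
  have := sol_redpow_intro F N p.den x hev'
  rwa [funext hx] at this

end RedPow

/-- Pure-injective modules are algebraically compact. -/
theorem algCompact_of_pureInj (N : Type u) [AddCommGroup N] [Module Tᵐᵒᵖ N]
    (hN : IsPureInj T N) : AlgCompact (T := T) N := by
  intro V E c d hfin
  classical
  choose σ hσ using hfin
  obtain ⟨ρ, hρ⟩ := hN (RedPow (T := T) (atTop : Filter (Finset E)) N)
    (diag (T := T) atTop N) (diag_pure atTop N)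
  have hρ' : ∀ y : N, ρ (diag (T := T) (atTop : Filter (Finset E)) N y) = y := fun y =>
    congrArg (fun g => g y) (congrArg DFunLike.coe hρ)
  refine ⟨fun v => ρ ((nullSub (T := T) atTop N).mkQ (fun s => σ s v)), fun e => ?_⟩
  have hz' : (nullSub (T := T) (atTop : Filter (Finset E)) N).mkQ
      (fun s => evalEq (c e) (σ s) + d e) = 0 := by
    rw [Submodule.mkQ_apply, Submodule.Quotient.mk_eq_zero]
    exact eventually_atTop.2 ⟨{e}, fun s hs => hσ s e (Finset.singleton_subset_iff.1 hs)⟩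
  have h2 : evalEq (c e) (fun v => ρ ((nullSub (T := T) atTop N).mkQ fun s => σ s v))
      = ρ ((nullSub (T := T) atTop N).mkQ (fun s => evalEq (c e) (σ s))) := by
    have h4 := (map_evalEq (ρ.comp (nullSub (T := T) atTop N).mkQ) (c e)
      (fun (v : V) (s : Finset E) => σ s v)).symm
    simp only [LinearMap.comp_apply] at h4
    rw [h4]
    congr 1
    congr 1
    funext s
    exact evalEq_apply (c e) _ s
  rw [h2, ← hρ' (d e), diag_apply, ← map_add ρ, ← map_add]
  have h5 : ((fun s => evalEq (c e) (σ s)) + fun _ => d e)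
      = fun s => evalEq (c e) (σ s) + d e := rfl
  rw [h5, hz', map_zero]

/-- Algebraically compact modules are pure-injective (via the extension lemma below). -/
theorem coeffOf_spec : True := trivial

end Pf

namespace Pf

open MulOpposite Filter

variable {T : Type u} [Ring T]

/-- The total coefficient of a variable in a formal linear expression. -/
def coeffOf {V : Type*} [DecidableEq V] (l : List (T × V)) (m : V) : T :=
  ((l.filter fun p => p.2 = m).map Prod.fst).sum

theorem sum_coeffOf {V : Type*} [DecidableEq V] {X : Type*} [AddCommGroup X] [Module Tᵐᵒᵖ X]
    (T₀ : Finset V) (z : V → X) (l : List (T × V)) (hl : ∀ p ∈ l, p.2 ∈ T₀) :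
    ∑ m ∈ T₀, op (coeffOf l m) • z m = evalEq l z := by
  induction l with
  | nil => simp [coeffOf, evalEq]
  | cons p l ih =>
    have hcoeff : ∀ m, coeffOf (p :: l) m = (if p.2 = m then p.1 else 0) + coeffOf l m := by
      intro m
      by_cases h : p.2 = m
      · simp [coeffOf, List.filter_cons, h]
      · simp [coeffOf, List.filter_cons, h]
    have hsplit : ∑ m ∈ T₀, op (coeffOf (p :: l) m) • z m
        = (∑ m ∈ T₀, op (if p.2 = m then p.1 else 0) • z m)
          + ∑ m ∈ T₀, op (coeffOf l m) • z m := by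
      rw [← Finset.sum_add_distrib]
      refine Finset.sum_congr rfl (fun m _ => ?_)
      rw [hcoeff, op_add, add_smul]
    have h1 : ∑ m ∈ T₀, op (if p.2 = m then p.1 else 0) • z m = op p.1 • z p.2 := by
      have h0 : ∀ m ∈ T₀, op (if p.2 = m then p.1 else 0) • z m
          = if p.2 = m then op p.1 • z m else 0 := by
        intro m _; by_cases h : p.2 = m <;> simp [h]
      rw [Finset.sum_congr rfl h0, Finset.sum_ite_eq T₀ p.2 (fun m => op p.1 • z m)]
      exact if_pos (hl p (List.mem_cons_self))
    rw [hsplit, h1, ih (fun q hq => hl q (List.mem_cons_of_mem p hq))]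
    simp [evalEq]

/-- The extension lemma: maps into algebraically compact modules can be built
from pp-type transfer data. -/
theorem ext_lemma {M Q A : Type u} [AddCommGroup M] [Module Tᵐᵒᵖ M]
    [AddCommGroup Q] [Module Tᵐᵒᵖ Q] (hQ : AlgCompact (T := T) Q)
    (u₀ : A → M) (q₀ : A → Q)
    (htr : ∀ (ι : Type) (_ : Fintype ι) (φ : PP T ι) (v : ι → A),
      (fun i => u₀ (v i)) ∈ φ.sol M → (fun i => q₀ (v i)) ∈ φ.sol Q) :
    ∃ h : M →ₗ[Tᵐᵒᵖ] Q, ∀ a, h (u₀ a) = q₀ a := by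
  classical
  set c : ((M × M) ⊕ ((T × M) ⊕ A)) → List (T × M) := fun e =>
    match e with
    | .inl (m₁, m₂) => [(1, m₁ + m₂), (-1, m₁), (-1, m₂)]
    | .inr (.inl (t, m)) => [(1, op t • m), (-t, m)]
    | .inr (.inr a) => [(1, u₀ a)] with hc
  set d : ((M × M) ⊕ ((T × M) ⊕ A)) → Q := fun e =>
    match e with
    | .inl _ => 0
    | .inr (.inl _) => 0
    | .inr (.inr a) => -q₀ a with hd
  have hfin : ∀ s : Finset ((M × M) ⊕ ((T × M) ⊕ A)),
      ∃ x : M → Q, ∀ e ∈ s, evalEq (c e) x + d e = 0 := by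
    intro s
    set T₀ : Finset M := s.biUnion (fun e => ((c e).map Prod.snd).toFinset) with hT₀
    have hcT₀ : ∀ e ∈ s, ∀ p ∈ c e, p.2 ∈ T₀ := by
      intro e he p hp
      exact Finset.mem_biUnion.2 ⟨e, he, List.mem_toFinset.2 (List.mem_map_of_mem (f := Prod.snd) hp)⟩
    set sA : Finset A := s.biUnion (fun e =>
      match e with
      | .inr (.inr a) => {a}
      | _ => ∅) with hsA
    have hmemA : ∀ a, (Sum.inr (Sum.inr a) : (M × M) ⊕ ((T × M) ⊕ A)) ∈ s → a ∈ sA := by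
      intro a ha
      exact Finset.mem_biUnion.2 ⟨Sum.inr (Sum.inr a), ha, by simp⟩
    set eA : ↥sA ≃ Fin (Fintype.card ↥sA) := Fintype.equivFin _ with heA
    set eK : ↥T₀ ≃ Fin (Fintype.card ↥T₀) := Fintype.equivFin _ with heK
    set eE : ↥s ≃ Fin (Fintype.card ↥s) := Fintype.equivFin _ with heE
    set Af : ((M × M) ⊕ ((T × M) ⊕ A)) → A → T := fun e a =>
      match e with
      | .inr (.inr a') => if a' = a then -1 else 0
      | _ => 0 with hAf
    set φs : PP T (Fin (Fintype.card ↥sA)) :=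
      { κ := Fin (Fintype.card ↥T₀), ε := Fin (Fintype.card ↥s),
        A := fun i j => Af ↑(eE.symm j) ↑(eA.symm i),
        B := fun k j => coeffOf (c ↑(eE.symm j)) ↑(eK.symm k) } with hφs
    -- master reduction of pp equations of `φs`
    have hmaster : ∀ (X : Type u) [AddCommGroup X] [Module Tᵐᵒᵖ X]
        (y : A → X) (z : M → X) (j : Fin (Fintype.card ↥s)),
        (∑ i, op (φs.A i j) • y ↑(eA.symm i)) + (∑ k, op (φs.B k j) • z ↑(eK.symm k))
          = (∑ b ∈ sA, op (Af ↑(eE.symm j) b) • y b) + evalEq (c ↑(eE.symm j)) z := by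
      intro X _ _ y z j
      congr 1
      · rw [Fintype.sum_equiv eA.symm (fun i => op (φs.A i j) • y ↑(eA.symm i))
          (fun b : ↥sA => op (Af ↑(eE.symm j) ↑b) • y ↑b) (fun i => rfl)]
        exact Finset.sum_coe_sort sA (fun b => op (Af ↑(eE.symm j) b) • y b)
      · rw [Fintype.sum_equiv eK.symm (fun k => op (φs.B k j) • z ↑(eK.symm k))
          (fun m : ↥T₀ => op (coeffOf (c ↑(eE.symm j)) ↑m) • z ↑m) (fun k => rfl)]
        rw [Finset.sum_coe_sort T₀ (fun m => op (coeffOf (c ↑(eE.symm j)) m) • z m)]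
        exact sum_coeffOf T₀ z _ (hcT₀ _ (eE.symm j).2)
    -- value of the free part
    have hfree : ∀ (X : Type u) [AddCommGroup X] [Module Tᵐᵒᵖ X] (y : A → X) (a : A),
        a ∈ sA → (∑ b ∈ sA, op (Af (Sum.inr (Sum.inr a)) b) • y b) = -(y a) := by
      intro X _ _ y a ha
      have h0 : ∀ b ∈ sA, op (Af (Sum.inr (Sum.inr a)) b) • y b
          = if a = b then -(y b) else 0 := by
        intro b _
        by_cases h : a = b <;> simp [hAf, h]
      rw [Finset.sum_congr rfl h0, Finset.sum_ite_eq sA a (fun b => -(y b)), if_pos ha]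
    have hfree0 : ∀ (X : Type u) [AddCommGroup X] [Module Tᵐᵒᵖ X] (y : A → X)
        (e : (M × M) ⊕ ((T × M) ⊕ A)), (∀ a, e ≠ Sum.inr (Sum.inr a)) →
        (∑ b ∈ sA, op (Af e b) • y b) = 0 := by
      intro X _ _ y e hene
      refine Finset.sum_eq_zero (fun b _ => ?_)
      rcases e with pa | pa | a
      · simp [hAf]
      · simp [hAf]
      · exact absurd rfl (hene a)
    -- the tuple from M solves φs
    have hMsol : (fun i => u₀ ↑(eA.symm i)) ∈ φs.sol M := by
      refine ⟨fun k => ↑(eK.symm k), fun j => ?_⟩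
      rw [hmaster M u₀ (fun m => m) j]
      rcases hje : (↑(eE.symm j) : (M × M) ⊕ ((T × M) ⊕ A)) with ⟨m₁, m₂⟩ | ⟨t, m⟩ | a
      · rw [hfree0 M u₀ (Sum.inl (m₁, m₂)) (fun a => by simp)]
        simp [hc, evalEq]
        abel
      · rw [hfree0 M u₀ (Sum.inr (Sum.inl (t, m))) (fun a => by simp)]
        simp [hc, evalEq]
      · have ha : a ∈ sA := by
          have h9 := (eE.symm j).2
          rw [hje] at h9
          exact hmemA a h9
        rw [hfree M u₀ a ha]
        simp [hc, evalEq]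
    -- transfer to Q
    obtain ⟨w, hw⟩ := htr (Fin (Fintype.card ↥sA)) inferInstance φs
      (fun i => ↑(eA.symm i)) hMsol
    set xq : M → Q := fun m => if hm : m ∈ T₀ then w (eK ⟨m, hm⟩) else 0 with hxq
    have hwk : ∀ k, xq ↑(eK.symm k) = w k := by
      intro k
      have hm : (↑(eK.symm k) : M) ∈ T₀ := (eK.symm k).2
      rw [hxq]
      dsimp only
      rw [dif_pos hm]
      have h7 : (⟨↑(eK.symm k), hm⟩ : ↥T₀) = eK.symm k := Subtype.ext rfl
      rw [h7, Equiv.apply_symm_apply]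
    refine ⟨xq, fun e he => ?_⟩
    have heq' : (∑ b ∈ sA, op (Af ↑(eE.symm (eE ⟨e, he⟩)) b) • q₀ b)
        + evalEq (c ↑(eE.symm (eE ⟨e, he⟩))) xq = 0 := by
      rw [← hmaster Q q₀ xq (eE ⟨e, he⟩)]
      have h6 : (∑ k, op (φs.B k (eE ⟨e, he⟩)) • xq ↑(eK.symm k))
          = ∑ k, op (φs.B k (eE ⟨e, he⟩)) • w k :=
        Finset.sum_congr rfl (fun k _ => by rw [hwk k])
      rw [h6]
      simpa using hw (eE ⟨e, he⟩)
    rw [Equiv.symm_apply_apply] at heq'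
    have hval : (↑(⟨e, he⟩ : ↥s) : (M × M) ⊕ ((T × M) ⊕ A)) = e := rfl
    rw [hval] at heq'
    rcases e with ⟨m₁, m₂⟩ | ⟨t, m⟩ | a
    · rw [hfree0 Q q₀ (Sum.inl (m₁, m₂)) (fun a => by simp), zero_add] at heq'
      simp only [hd]
      rw [add_zero]
      exact heq'
    · rw [hfree0 Q q₀ (Sum.inr (Sum.inl (t, m))) (fun a => by simp), zero_add] at heq'
      simp only [hd]
      rw [add_zero]
      exact heq'
    · have ha : a ∈ sA := hmemA a he
      rw [hfree Q q₀ a ha] at heq'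
      simp only [hd]
      rw [add_comm] at heq'
      exact heq'
  obtain ⟨x, hx⟩ := hQ M ((M × M) ⊕ ((T × M) ⊕ A)) c d hfin
  have hadd : ∀ m₁ m₂ : M, x (m₁ + m₂) = x m₁ + x m₂ := by
    intro m₁ m₂
    have h := hx (Sum.inl (m₁, m₂))
    simp only [hc, hd, evalEq, List.map_cons, List.map_nil, List.sum_cons, List.sum_nil,
      op_one, one_smul, op_neg, neg_smul, add_zero] at h
    have h' : x (m₁ + m₂) - (x m₁ + x m₂) = 0 := by rw [← h]; abel
    have := sub_eq_zero.1 h'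
    exact this
  have hsmul : ∀ (t : Tᵐᵒᵖ) (m : M), x (t • m) = t • x m := by
    intro t m
    have h := hx (Sum.inr (Sum.inl (t.unop, m)))
    simp only [hc, hd, evalEq, List.map_cons, List.map_nil, List.sum_cons, List.sum_nil,
      op_one, one_smul, op_neg, neg_smul, add_zero, op_unop] at h
    have h' : x (t • m) - t • x m = 0 := by rw [← h]; abel
    exact sub_eq_zero.1 h'
  refine ⟨{ toFun := x, map_add' := hadd, map_smul' := fun t m => by simp [hsmul] }, fun a => ?_⟩
  have h := hx (Sum.inr (Sum.inr a))
  simp only [hc, hd, evalEq, List.map_cons, List.map_nil, List.sum_cons, List.sum_nil,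
    op_one, one_smul, add_zero] at h
  exact add_neg_eq_zero.1 h

/-- Algebraically compact modules are pure-injective. -/
theorem pureInj_of_algCompact (P : Type u) [AddCommGroup P] [Module Tᵐᵒᵖ P]
    (hP : AlgCompact (T := T) P) : IsPureInj T P := by
  intro M' _ _ g hg
  obtain ⟨h, hh⟩ := ext_lemma hP (fun a : P => g a) (fun a => a)
    (fun ι _ φ v hv => by simpa using hg.2 ι ‹_› φ v (by simpa using hv))
  exact ⟨h, LinearMap.ext hh⟩

end Pf

namespace Pf

open MulOpposite

variable {T : Type u} [Ring T] {U : Type u} [Ring U]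

/-- The trivially true pp formula. -/
def truePP {ι : Type} : PP T ι :=
  { κ := Empty, ε := Empty, A := fun _ e => e.elim, B := fun _ e => e.elim }

/-- Conjunction of two pp formulas. -/
def andPP {ι : Type} (φ₁ φ₂ : PP T ι) : PP T ι where
  κ := φ₁.κ ⊕ φ₂.κ
  ε := φ₁.ε ⊕ φ₂.ε
  A := fun i => Sum.elim (φ₁.A i) (φ₂.A i)
  B := fun k => Sum.elim
    (fun e₁ => Sum.elim (fun k₁ => φ₁.B k₁ e₁) (fun _ => 0) k)
    (fun e₂ => Sum.elim (fun _ => 0) (fun k₂ => φ₂.B k₂ e₂) k)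

theorem sol_truePP {ι : Type} [Fintype ι] (X : Type v) [AddCommGroup X] [Module Tᵐᵒᵖ X]
    (x : ι → X) : x ∈ (truePP (T := T)).sol X :=
  ⟨fun k => k.elim, fun e => e.elim⟩

theorem sol_map_truePP {ι : Type} [Fintype ι] (f : T →+* U) (X : Type v) [AddCommGroup X]
    [Module Uᵐᵒᵖ X] (x : ι → X) : x ∈ ((truePP (T := T)).map f).sol X :=
  ⟨fun k => k.elim, fun e => e.elim⟩

theorem sol_andPP {ι : Type} [Fintype ι] (φ₁ φ₂ : PP T ι) (X : Type v) [AddCommGroup X]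
    [Module Tᵐᵒᵖ X] (x : ι → X) :
    x ∈ (andPP φ₁ φ₂).sol X ↔ x ∈ φ₁.sol X ∧ x ∈ φ₂.sol X := by
  constructor
  · rintro ⟨b, hb⟩
    constructor
    · refine ⟨fun k₁ => b (Sum.inl k₁), fun e₁ => ?_⟩
      have hh := hb (Sum.inl e₁); erw [Fintype.sum_sum_type] at hh; simpa [andPP] using hh
    · refine ⟨fun k₂ => b (Sum.inr k₂), fun e₂ => ?_⟩
      have hh := hb (Sum.inr e₂); erw [Fintype.sum_sum_type] at hh; simpa [andPP] using hh
  · rintro ⟨⟨b₁, hb₁⟩, ⟨b₂, hb₂⟩⟩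
    refine ⟨Sum.elim b₁ b₂, fun e => ?_⟩
    rcases e with e₁ | e₂
    · erw [Fintype.sum_sum_type]; simpa [andPP] using hb₁ e₁
    · erw [Fintype.sum_sum_type]; simpa [andPP] using hb₂ e₂

theorem sol_map_andPP {ι : Type} [Fintype ι] (f : T →+* U) (φ₁ φ₂ : PP T ι) (X : Type v)
    [AddCommGroup X] [Module Uᵐᵒᵖ X] (x : ι → X) :
    x ∈ ((andPP φ₁ φ₂).map f).sol X ↔ x ∈ (φ₁.map f).sol X ∧ x ∈ (φ₂.map f).sol X := by
  constructor
  · rintro ⟨b, hb⟩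
    constructor
    · refine ⟨fun k₁ => b (Sum.inl k₁), fun e₁ => ?_⟩
      have hh := hb (Sum.inl e₁); erw [Fintype.sum_sum_type] at hh; simp [andPP, PP.map, Sum.elim] at hh ⊢; exact hh
    · refine ⟨fun k₂ => b (Sum.inr k₂), fun e₂ => ?_⟩
      have hh := hb (Sum.inr e₂); erw [Fintype.sum_sum_type] at hh; simp [andPP, PP.map, Sum.elim] at hh ⊢; exact hh
  · rintro ⟨⟨b₁, hb₁⟩, ⟨b₂, hb₂⟩⟩
    refine ⟨Sum.elim b₁ b₂, fun e => ?_⟩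
    rcases e with e₁ | e₂
    · erw [Fintype.sum_sum_type]; have hh := hb₁ e₁; simp [andPP, PP.map, Sum.elim] at hh ⊢; exact hh
    · erw [Fintype.sum_sum_type]; have hh := hb₂ e₂; simp [andPP, PP.map, Sum.elim] at hh ⊢; exact hh

/-- Conjunction of a list of pp formulas. -/
def listAnd {ι : Type} (l : List (PP T ι)) : PP T ι := l.foldr andPP truePP

theorem sol_listAnd {ι : Type} [Fintype ι] (l : List (PP T ι)) (X : Type v) [AddCommGroup X]
    [Module Tᵐᵒᵖ X] (x : ι → X) :
    x ∈ (listAnd l).sol X ↔ ∀ φ ∈ l, x ∈ φ.sol X := by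
  induction l with
  | nil => simpa [listAnd] using sol_truePP (T := T) X x
  | cons φ l ih =>
    have : listAnd (φ :: l) = andPP φ (listAnd l) := rfl
    rw [this, sol_andPP, ih]
    simp

theorem sol_map_listAnd {ι : Type} [Fintype ι] (f : T →+* U) (l : List (PP T ι)) (X : Type v)
    [AddCommGroup X] [Module Uᵐᵒᵖ X] (x : ι → X) :
    x ∈ ((listAnd l).map f).sol X ↔ ∀ φ ∈ l, x ∈ (φ.map f).sol X := by
  induction l with
  | nil => simpa [listAnd] using sol_map_truePP (T := T) f X x
  | cons φ l ih =>
    have : (listAnd (φ :: l)).map f = (andPP φ (listAnd l)).map f := rfl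
    rw [this, sol_map_andPP, ih]
    simp

/-- Normalized pp formulas in `n` free variables, as data. -/
def NormF (T : Type u) [Ring T] (n : ℕ) : Type u :=
  (k : ℕ) × (e : ℕ) × (Matrix (Fin n) (Fin e) T × Matrix (Fin k) (Fin e) T)

/-- The pp formula attached to a normalized datum. -/
def NormF.toPP {n : ℕ} (ν : NormF T n) : PP T (Fin n) :=
  { κ := Fin ν.1, ε := Fin ν.2.1, A := ν.2.2.1, B := ν.2.2.2 }

/-- Substitution of variables plus normalization. -/
theorem normSubst {ι : Type} [Fintype ι] (φ : PP T ι) (n : ℕ) (v : ι → Fin n) :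
    ∃ ν : NormF T n, ∀ (X : Type v) [AddCommGroup X] [Module Tᵐᵒᵖ X] (x : Fin n → X),
      x ∈ ν.toPP.sol X ↔ (fun i => x (v i)) ∈ φ.sol X := by
  classical
  set eκ := Fintype.equivFin φ.κ with heκ
  set eε := Fintype.equivFin φ.ε with heε
  refine ⟨⟨Fintype.card φ.κ, Fintype.card φ.ε,
    (fun i j => ∑ i' ∈ Finset.univ.filter (fun i' => v i' = i), φ.A i' (eε.symm j),
     fun k j => φ.B (eκ.symm k) (eε.symm j))⟩, ?_⟩
  intro X _ _ x
  have key : ∀ (bn : Fin (Fintype.card φ.κ) → X) (jn : Fin (Fintype.card φ.ε)),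
      ((∑ i, op (∑ i' ∈ Finset.univ.filter (fun i' => v i' = i), φ.A i' (eε.symm jn)) • x i)
        + ∑ kn, op (φ.B (eκ.symm kn) (eε.symm jn)) • bn kn)
      = (∑ i', op (φ.A i' (eε.symm jn)) • x (v i'))
        + ∑ k, op (φ.B k (eε.symm jn)) • bn (eκ k) := by
    intro bn jn
    congr 1
    · have h1 : ∀ i ∈ (Finset.univ : Finset (Fin n)),
          op (∑ i' ∈ Finset.univ.filter (fun i' => v i' = i), φ.A i' (eε.symm jn)) • x i
          = ∑ i' ∈ Finset.univ.filter (fun i' => v i' = i),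
              op (φ.A i' (eε.symm jn)) • x (v i') := by
        intro i _
        rw [Finset.op_sum, Finset.sum_smul]
        refine Finset.sum_congr rfl (fun i' hi' => ?_)
        rw [(Finset.mem_filter.1 hi').2]
      rw [Finset.sum_congr rfl h1]
      exact Finset.sum_fiberwise Finset.univ v (fun i' => op (φ.A i' (eε.symm jn)) • x (v i'))
    · exact (Fintype.sum_equiv eκ (fun k => op (φ.B k (eε.symm jn)) • bn (eκ k))
        (fun kn => op (φ.B (eκ.symm kn) (eε.symm jn)) • bn kn)
        (fun k => by simp)).symm
  constructor
  · rintro ⟨bn, hbn⟩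
    dsimp only [NormF.toPP] at hbn
    refine ⟨fun k => bn (eκ k), fun j => ?_⟩
    have h2 := hbn (eε j)
    erw [key bn (eε j)] at h2
    simpa [Equiv.symm_apply_apply] using h2
  · rintro ⟨b, hb⟩
    refine ⟨fun kn => b (eκ.symm kn), fun jn => ?_⟩
    dsimp only [NormF.toPP]
    erw [key (fun kn => b (eκ.symm kn)) jn]
    have h2 := hb (eε.symm jn)
    simpa [Equiv.symm_apply_apply] using h2

end Pf

namespace Pf

open MulOpposite Filter

variable {R : Type u} {S : Type u} [Ring R] [Ring S]

theorem algCompact_res (f : R →+* S) (N : ModuleCat.{u} Sᵐᵒᵖ)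
    (h : AlgCompact (T := S) ↥N) : AlgCompact (T := R) ↥(resMod R S f N) := by
  intro V E c d hfin
  have key : ∀ (l : List (R × V)) (x : V → ↥N),
      evalEq (T := S) (l.map (fun p => (f p.1, p.2))) x
        = evalEq (T := R) (X := ↥(resMod R S f N)) l x := by
    intro l x
    unfold evalEq
    rw [List.map_map]
    exact congrArg List.sum (List.map_congr_left fun p _ => rfl)
  obtain ⟨x, hx⟩ := h V E (fun e => (c e).map (fun p => (f p.1, p.2))) d
    (fun s => by
      obtain ⟨x, hx⟩ := hfin s
      exact ⟨x, fun e he => by have hh := hx e he; rw [← key (c e) x] at hh; exact hh⟩)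
  exact ⟨x, fun e => by rw [← key]; exact hx e⟩

end Pf

open Pf MulOpposite Filter in
/-- If `N` is an elementary cogenerator for a definable subcategory
`C` of `Mod-S`, then its restriction `N_R` along `f : R → S` is an elementary
cogenerator for `C|_R`. -/
theorem statement2 (R S : Type u) [Ring R] [Ring S] (f : R →+* S)
    (C : Set (ModuleCat.{u} Sᵐᵒᵖ)) (hC : IsDefinable S C)
    (N : ModuleCat.{u} Sᵐᵒᵖ) (hN : IsElemCogen S C N) :
    IsElemCogen R (restrictSubcat R S f C) (resMod R S f N) := by
  classical
  obtain ⟨hNC, hNpi, hNcog⟩ := hN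
  obtain ⟨ΦC, hΦC⟩ := hC
  have solres : ∀ {ι : Type} [Fintype ι] (φ : PP R ι) (x : ι → ↥N),
      x ∈ (φ.map f).sol ↥N ↔ x ∈ φ.sol ↥(resMod R S f N) := fun φ x => Iff.rfl
  -- Part 1 : membership
  have hmem : resMod R S f N ∈ restrictSubcat R S f C := by
    intro p hp
    exact hp N hNC
  -- Part 2 : pure-injectivity
  have hACS : AlgCompact (T := S) ↥N := algCompact_of_pureInj ↥N hNpi
  have hACR : AlgCompact (T := R) ↥(resMod R S f N) := algCompact_res f N hACS
  have hPI : IsPureInj R ↥(resMod R S f N) := pureInj_of_algCompact _ hACR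
  refine ⟨hmem, hPI, ?_⟩
  -- Part 3 : every member of the restricted category purely embeds in a power
  intro M hM
  -- the key claim
  have key : ∀ (n : ℕ) (a : Fin n → ↥M) (ψ : NormF R n),
      a ∉ ψ.toPP.sol ↥M →
      ∃ h : ↥M →ₗ[Rᵐᵒᵖ] ↥(resMod R S f N),
        (fun i => h (a i)) ∉ ψ.toPP.sol ↥(resMod R S f N) := by
    intro n a ψ hψ
    set p₀ : Set (NormF R n) := {ν | a ∈ ν.toPP.sol ↥M} with hp₀
    -- finite satisfiability inside N itself
    have hfs : ∀ Tf : Finset {ν : NormF R n // ν ∈ p₀},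
        ∃ eb : Fin n → ↥N,
          (∀ νs : {ν : NormF R n // ν ∈ p₀}, νs ∈ Tf →
            eb ∈ ((νs : {ν : NormF R n // ν ∈ p₀}).1.toPP.map f).sol ↥N) ∧
          eb ∉ (ψ.toPP.map f).sol ↥N := by
      intro Tf
      set l : List (PP R (Fin n)) :=
        Tf.toList.map (fun νs => (νs : {ν : NormF R n // ν ∈ p₀}).1.toPP) with hl
      set pr : PPPair R := ⟨n, listAnd l, andPP (listAnd l) ψ.toPP, fun X _ _ => by
        intro x hx
        exact ((sol_andPP (listAnd l) ψ.toPP X x).1 hx).1⟩ with hpr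
      have hnotin : ¬ ∀ M' ∈ C, (pr.num.map f).sol ↥M' = (pr.den.map f).sol ↥M' := by
        intro hin
        have hcl := hM pr hin
        have hconjsol : a ∈ (listAnd l).sol ↥M := by
          rw [sol_listAnd]
          intro φ hφ
          rw [hl] at hφ
          obtain ⟨νs, hνs, rfl⟩ := List.mem_map.1 hφ
          exact νs.2
        have hden : a ∈ pr.den.sol ↥M := by
          have : a ∈ pr.num.sol ↥M := hconjsol
          rwa [hcl] at this
        exact hψ ((sol_andPP (listAnd l) ψ.toPP ↥M a).1 hden).2
      push_neg at hnotin
      obtain ⟨M', hM'C, hne⟩ := hnotin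
      have hsub : (pr.den.map f).sol ↥M' ⊆ (pr.num.map f).sol ↥M' := by
        intro x hx
        exact ((sol_map_andPP f (listAnd l) ψ.toPP ↥M' x).1 hx).1
      obtain ⟨cb, hcb1, hcb2⟩ :=
        Set.exists_of_ssubset (ssubset_of_subset_of_ne hsub (Ne.symm hne))
      have hcψ : cb ∉ (ψ.toPP.map f).sol ↥M' := by
        intro hc
        exact hcb2 ((sol_map_andPP f (listAnd l) ψ.toPP ↥M' cb).2 ⟨hcb1, hc⟩)
      obtain ⟨K, gS, hgS⟩ := hNcog M' hM'C
      have h₀num : (fun j => gS (cb j)) ∈ (pr.num.map f).sol (K → ↥N) :=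
        sol_hom _ gS hcb1
      have h₀ψ : (fun j => gS (cb j)) ∉ (ψ.toPP.map f).sol (K → ↥N) := by
        intro hc
        exact hcψ (hgS.2 (Fin n) inferInstance (ψ.toPP.map f) cb hc)
      have hex : ¬ ∀ k, (fun j => gS (cb j) k) ∈ (ψ.toPP.map f).sol ↥N := by
        intro hk
        exact h₀ψ ((sol_pi _ _ _).2 hk)
      push_neg at hex
      obtain ⟨k, hk⟩ := hex
      refine ⟨fun j => gS (cb j) k, fun νs hνs => ?_, hk⟩
      have hkc := (sol_pi (pr.num.map f) ↥N (fun j => gS (cb j))).1 h₀num k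
      have hmeml : νs.1.toPP ∈ l := by
        rw [hl]
        exact List.mem_map.2 ⟨νs, Finset.mem_toList.2 hνs, rfl⟩
      exact (sol_map_listAnd f l ↥N (fun j => gS (cb j) k)).1 hkc νs.1.toPP hmeml
    choose eb heb1 heb2 using hfs
    -- reduced power of N
    set dx : Fin n → (Finset {ν : NormF R n // ν ∈ p₀} → ↥N) := fun j Tf => eb Tf j with hdx
    have hd'mem : ∀ ν, ∀ hν : ν ∈ p₀,
        (fun j => (nullSub (T := S) (atTop : Filter (Finset {ν : NormF R n // ν ∈ p₀})) ↥N).mkQ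
          (dx j)) ∈ ((NormF.toPP ν).map f).sol
            (RedPow (T := S) (atTop : Filter (Finset {ν : NormF R n // ν ∈ p₀})) ↥N) := by
      intro ν hν
      apply sol_redpow_intro
      refine eventually_atTop.2 ⟨{⟨ν, hν⟩}, fun Tf hTf => ?_⟩
      exact heb1 Tf ⟨ν, hν⟩ (Finset.singleton_subset_iff.1 hTf)
    have hd'ψ : (fun j => (nullSub (T := S)
          (atTop : Filter (Finset {ν : NormF R n // ν ∈ p₀})) ↥N).mkQ (dx j))
        ∉ ((NormF.toPP ψ).map f).sol
            (RedPow (T := S) (atTop : Filter (Finset {ν : NormF R n // ν ∈ p₀})) ↥N) := by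
      intro hc
      obtain ⟨Tf, hTf⟩ := (sol_redpow_elim _ ↥N _ dx hc).exists
      exact heb2 Tf hTf
    have hPSC : ModuleCat.of Sᵐᵒᵖ
        (RedPow (T := S) (atTop : Filter (Finset {ν : NormF R n // ν ∈ p₀})) ↥N) ∈ C := by
      rw [hΦC]
      intro p hp
      have hNcl : p.ClosedOn ↥N := by
        have h9 := hNC
        rw [hΦC] at h9
        exact h9 p hp
      exact closedOn_redpow _ ↥N p hNcl
    obtain ⟨K₂, g₂, hg₂⟩ := hNcog _ hPSC
    have h₁mem : ∀ ν, ν ∈ p₀ → (fun j => g₂ ((nullSub (T := S)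
          (atTop : Filter (Finset {ν : NormF R n // ν ∈ p₀})) ↥N).mkQ (dx j)))
        ∈ ((NormF.toPP ν).map f).sol (K₂ → ↥N) :=
      fun ν hν => sol_hom _ g₂ (hd'mem ν hν)
    have h₁ψ : (fun j => g₂ ((nullSub (T := S)
          (atTop : Filter (Finset {ν : NormF R n // ν ∈ p₀})) ↥N).mkQ (dx j)))
        ∉ ((NormF.toPP ψ).map f).sol (K₂ → ↥N) := by
      intro hc
      exact hd'ψ (hg₂.2 (Fin n) inferInstance _ _ hc)
    have hex : ¬ ∀ k, (fun j => g₂ ((nullSub (T := S)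
          (atTop : Filter (Finset {ν : NormF R n // ν ∈ p₀})) ↥N).mkQ (dx j)) k)
        ∈ ((NormF.toPP ψ).map f).sol ↥N := by
      intro hk
      exact h₁ψ ((sol_pi _ _ _).2 hk)
    push_neg at hex
    obtain ⟨k₂, hk₂⟩ := hex
    set db : Fin n → ↥N := fun j => g₂ ((nullSub (T := S)
          (atTop : Filter (Finset {ν : NormF R n // ν ∈ p₀})) ↥N).mkQ (dx j)) k₂ with hdb
    have hdbmem : ∀ ν, ν ∈ p₀ → db ∈ ((NormF.toPP ν).map f).sol ↥N :=
      fun ν hν => (sol_pi _ ↥N _).1 (h₁mem ν hν) k₂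
    -- build the linear map by the extension lemma
    obtain ⟨h, hh⟩ := ext_lemma (T := R) (M := ↥M) (Q := ↥(resMod R S f N))
      (A := ULift.{u} (Fin n)) hACR (fun i => a i.down) (fun i => db i.down)
      (by
        intro ι _ φ v hv
        obtain ⟨ν, hν⟩ := normSubst (T := R) φ n (fun i => (v i).down)
        have h6 : a ∈ ν.toPP.sol ↥M := (hν ↥M a).2 hv
        have h9 : db ∈ ν.toPP.sol ↥(resMod R S f N) := (solres ν.toPP db).1 (hdbmem ν h6)
        exact (hν ↥(resMod R S f N) db).1 h9)
    refine ⟨h, fun hc => ?_⟩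
    have he : (fun i => h (a i)) = db := funext (fun i => hh ⟨i⟩)
    rw [he] at hc
    exact hk₂ ((solres (NormF.toPP ψ) db).2 hc)
  -- the formula `x = 0`
  have hψ0 : ∀ (X : Type u) [AddCommGroup X] [Module Rᵐᵒᵖ X] (x : Fin 1 → X),
      x ∈ (NormF.toPP (⟨0, 1, (fun _ _ => 1, fun k => Fin.elim0 k)⟩ : NormF R 1)).sol X
        ↔ x 0 = 0 := by
    intro X _ _ x
    constructor
    · rintro ⟨bb, hbb⟩
      have h9 := hbb ((0 : Fin 1))
      erw [Fin.sum_univ_zero] at h9; simpa [NormF.toPP] using h9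
    · intro hx
      refine ⟨fun k => Fin.elim0 k, fun j => ?_⟩
      erw [Fin.sum_univ_zero]; simp [NormF.toPP, hx]
  -- index and map
  have hsel : ∀ τ : {τ : (n : ℕ) × ((Fin n → ↥M) × NormF R n) //
      τ.2.1 ∉ τ.2.2.toPP.sol ↥M},
      ∃ h : ↥M →ₗ[Rᵐᵒᵖ] ↥(resMod R S f N),
        (fun i => h (τ.1.2.1 i)) ∉ τ.1.2.2.toPP.sol ↥(resMod R S f N) :=
    fun τ => key τ.1.1 τ.1.2.1 τ.1.2.2 τ.2
  choose hmap hspec using hsel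
  refine ⟨{τ : (n : ℕ) × ((Fin n → ↥M) × NormF R n) // τ.2.1 ∉ τ.2.2.toPP.sol ↥M},
    LinearMap.pi (fun τ => hmap τ), ?_, ?_⟩
  · -- injectivity
    rw [injective_iff_map_eq_zero]
    intro b hb
    by_contra hb0
    have hanot : (fun _ : Fin 1 => b) ∉
        (NormF.toPP (⟨0, 1, (fun _ _ => 1, fun k => Fin.elim0 k)⟩ : NormF R 1)).sol ↥M := by
      intro hc
      exact hb0 ((hψ0 ↥M _).1 hc)
    set τ : {τ : (n : ℕ) × ((Fin n → ↥M) × NormF R n) // τ.2.1 ∉ τ.2.2.toPP.sol ↥M} :=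
      ⟨⟨1, fun _ => b, ⟨0, 1, (fun _ _ => 1, fun k => Fin.elim0 k)⟩⟩, hanot⟩ with hτ
    apply hspec τ
    apply (hψ0 ↥(resMod R S f N) _).2
    show hmap τ b = 0
    have h9 : hmap τ b = LinearMap.pi (fun τ => hmap τ) b τ := rfl
    rw [h9, hb]
    rfl
  · -- reflection of pp formulas
    intro ι inst φ b hb
    by_contra hnb
    obtain ⟨ν, hν⟩ := normSubst (T := R) φ (Fintype.card ι) (Fintype.equivFin ι)
    have hanot : (fun i0 => b ((Fintype.equivFin ι).symm i0)) ∉ ν.toPP.sol ↥M := by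
      intro hc
      apply hnb
      have h9 := (hν ↥M _).1 hc
      have he : (fun i => b ((Fintype.equivFin ι).symm ((Fintype.equivFin ι) i))) = b := by
        funext i
        simp
      rwa [he] at h9
    set τ : {τ : (n : ℕ) × ((Fin n → ↥M) × NormF R n) // τ.2.1 ∉ τ.2.2.toPP.sol ↥M} :=
      ⟨⟨Fintype.card ι, fun i0 => b ((Fintype.equivFin ι).symm i0), ν⟩, hanot⟩ with hτ
    have hcomp := (sol_pi φ ↥(resMod R S f N)
      (fun i => LinearMap.pi (fun τ => hmap τ) (b i))).1 hb τ
    have hc3 : (fun i0 => hmap τ (b ((Fintype.equivFin ι).symm i0)))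
        ∈ ν.toPP.sol ↥(resMod R S f N) := by
      apply (hν _ _).2
      show (fun i => hmap τ (b ((Fintype.equivFin ι).symm ((Fintype.equivFin ι) i))))
        ∈ φ.sol ↥(resMod R S f N)
      have he : (fun i => hmap τ (b ((Fintype.equivFin ι).symm ((Fintype.equivFin ι) i))))
          = fun i => hmap τ (b i) := by
        funext i
        simp
      rw [he]
      exact hcomp
    exact hspec τ hc3

end MTM
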